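/- arXiv:2511.07435 — 7 statements merged into one kernel-verified Lean document; each statement's English description precedes it below -/
import Mathlib

section
/- For every integer r ≥ 0 and every x ≥ 0, the r-th moment of the Szász–Mirakyan–Laguerre–Durrmeyer operator has the closed form μ_r^{(α,β)}(x) = (1/(n−β)^r) · Σ_{k=0}^∞ (α+1+k)_r · ψ_{n,k}(x), where (a)_r = a(a+1)⋯(a+r−1) is the Pochhammer (rising factorial) symbol. -/
open MeasureTheory Real Filter

/-- The Szász–Mirakyan basis functions `ψ_{n,k}(x) = e^{-nx} (nx)^k / k!`. -/
noncomputable def psi (n k : ℕ) (x : ℝ) : ℝ :=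
  Real.exp (-(n * x)) * (n * x) ^ k / (Nat.factorial k)

/-- The Szász–Mirakyan–Laguerre–Durrmeyer operator `M_n^{(α,β)}`. -/
noncomputable def M (α β : ℝ) (n : ℕ) (f : ℝ → ℝ) (x : ℝ) : ℝ :=
  ∑' k : ℕ, (((n : ℝ) - β) ^ ((k : ℝ) + α + 1) / Real.Gamma ((k : ℝ) + α + 1)) *
    (∫ t in Set.Ioi (0 : ℝ), f t * t ^ ((k : ℝ) + α) * Real.exp (-((n : ℝ) - β) * t)) *
    psi n k x

/-- The `r`-th moment `μ_r^{(α,β)}(x) = M_n^{(α,β)}[t ↦ t^r](x)`. -/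
noncomputable def mu (α β : ℝ) (n : ℕ) (r : ℕ) (x : ℝ) : ℝ :=
  M α β n (fun t => t ^ r) x

/-
The `k`-th Laguerre weight `t ↦ c^{k+α+1} t^{k+α} e^{-ct} / Γ(k+α+1)` (with `c = n - β`) is a
Gamma density, so integrating `t^r` against it gives `Γ(k+α+r+1) / (Γ(k+α+1) c^r)`, which is the
rising factorial `(k+α+1)_r / c^r`. The moment identity then holds term by term in `k`.
-/

theorem Real.Gamma_add_nat_eq_ascPochhammer_mul {x : ℝ} (hx : ∀ m : ℕ, x ≠ -m) (r : ℕ) :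
    Gamma (x + r) = (ascPochhammer ℝ r).eval x * Gamma x := by
  induction r with
  | zero => simp
  | succ m ih =>
    have hxm : x + m ≠ 0 := fun h => hx m (eq_neg_of_add_eq_zero_left h)
    rw [Nat.cast_succ, ← add_assoc, Real.Gamma_add_one hxm, ih, ascPochhammer_succ_right,
      Polynomial.eval_mul, Polynomial.eval_add, Polynomial.eval_X, Polynomial.eval_natCast]
    ring

theorem integral_pow_mul_rpow_mul_exp_neg_mul_Ioi {s c : ℝ} (hs : -1 < s) (hc : 0 < c) (r : ℕ) :
    ∫ t in Set.Ioi (0 : ℝ), t ^ r * t ^ s * exp (-c * t) =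
      Gamma (s + r + 1) / c ^ (s + r + 1) := by
  have hsr : 0 < s + r + 1 := by have := r.cast_nonneg (α := ℝ); linarith
  rw [div_eq_mul_inv, mul_comm, ← Real.inv_rpow hc.le, ← one_div,
    ← integral_rpow_mul_exp_neg_mul_Ioi hsr hc]
  refine setIntegral_congr_fun measurableSet_Ioi fun t (ht : 0 < t) => ?_
  rw [add_sub_cancel_right, Real.rpow_add ht, Real.rpow_natCast, neg_mul]
  ring

theorem rpow_div_Gamma_mul_integral_pow_eq_ascPochhammer {s c : ℝ} (hs : -1 < s) (hc : 0 < c)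
    (r : ℕ) :
    c ^ (s + 1) / Gamma (s + 1) * ∫ t in Set.Ioi (0 : ℝ), t ^ r * t ^ s * exp (-c * t) =
      (ascPochhammer ℝ r).eval (s + 1) / c ^ r := by
  have hs1 : 0 < s + 1 := by linarith
  have hGamma : Gamma (s + r + 1) = (ascPochhammer ℝ r).eval (s + 1) * Gamma (s + 1) := by
    rw [add_right_comm]
    refine Real.Gamma_add_nat_eq_ascPochhammer_mul (fun m h => ?_) r
    have := m.cast_nonneg (α := ℝ)
    linarith
  have hpow : c ^ (s + r + 1) = c ^ (s + 1) * c ^ r := by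
    rw [add_right_comm, Real.rpow_add hc, Real.rpow_natCast]
  rw [integral_pow_mul_rpow_mul_exp_neg_mul_Ioi hs hc, hGamma, hpow]
  have := (Real.Gamma_pos_of_pos hs1).ne'
  have := (Real.rpow_pos_of_pos hc (s + 1)).ne'
  field_simp

theorem stmt_0_general (α β : ℝ) (hα : -1 < α) (n : ℕ) (hn : β < n) (r : ℕ) (x : ℝ) :
    mu α β n r x =
      (1 / ((n : ℝ) - β) ^ r) *
        ∑' k : ℕ, (ascPochhammer ℝ r).eval (α + 1 + (k : ℝ)) * psi n k x := by
  have hc : 0 < (n : ℝ) - β := sub_pos.mpr hn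
  rw [mu, M, ← tsum_mul_left]
  refine tsum_congr fun k => ?_
  have hk : -1 < (k : ℝ) + α := by have := k.cast_nonneg (α := ℝ); linarith
  rw [rpow_div_Gamma_mul_integral_pow_eq_ascPochhammer hk hc,
    show (k : ℝ) + α + 1 = α + 1 + k by ring]
  ring

/-- Closed form of the `r`-th moment as a Poisson-weighted series of rising factorials. -/
theorem stmt_0 (α β : ℝ) (hα : -1 < α) (n : ℕ) (hn : β < n) (r : ℕ) (x : ℝ) (hx : 0 ≤ x) :
    mu α β n r x =
      (1 / ((n : ℝ) - β) ^ r) *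
        ∑' k : ℕ, (ascPochhammer ℝ r).eval (α + 1 + (k : ℝ)) * psi n k x :=
  stmt_0_general α β hα n hn r x
end

section
/- For every x ≥ 0, the first moment satisfies μ_1^{(α,β)}(x) = (α + 1 + n x)/(n − β). -/
open MeasureTheory Real Filter

/-! The coefficient `(n-β)^{k+α+1}/Γ(k+α+1)` normalises `t^{k+α} e^{-(n-β)t}` to a Gamma
density, whose mean is `(k+α+1)/(n-β)`. Hence `μ_1(x)` is the average of `(k+α+1)/(n-β)` against
the Poisson weights `ψ_{n,k}(x)`, which have total mass `1` and mean `nx`. -/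

open Set Nat

theorem rpow_div_Gamma_mul_integral_mul_rpow_mul_exp {s c : ℝ} (hs : -1 < s) (hc : 0 < c) :
    c ^ (s + 1) / Gamma (s + 1) * ∫ t in Ioi 0, t ^ 1 * t ^ s * exp (-c * t) = (s + 1) / c := by
  have hs1 : 0 < s + 1 := by linarith
  have hintegral : ∫ t in Ioi 0, t ^ 1 * t ^ s * exp (-c * t) =
      (1 / c) ^ (s + 1 + 1) * Gamma (s + 1 + 1) := by
    rw [← integral_rpow_mul_exp_neg_mul_Ioi (by linarith) hc]
    refine setIntegral_congr_fun measurableSet_Ioi fun t (ht : 0 < t) => ?_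
    rw [add_sub_cancel_right, rpow_add_one ht.ne', pow_one, neg_mul, mul_comm t]
  have hpow : (1 / c) ^ (s + 1 + 1) = (c ^ (s + 1))⁻¹ * c⁻¹ := by
    rw [rpow_add_one (by positivity), one_div, inv_rpow hc.le]
  rw [hintegral, hpow, Gamma_add_one hs1.ne']
  have := (Gamma_pos_of_pos hs1).ne'
  have := (rpow_pos_of_pos hc (s + 1)).ne'
  field_simp

theorem hasSum_pow_div_factorial (y : ℝ) : HasSum (fun k : ℕ => y ^ k / k !) (exp y) := by
  rw [exp_eq_exp_ℝ]
  exact NormedSpace.expSeries_div_hasSum_exp y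

theorem hasSum_nat_mul_pow_div_factorial (y : ℝ) :
    HasSum (fun k : ℕ => k * (y ^ k / k !)) (y * exp y) := by
  rw [← hasSum_nat_add_iff' 1, Finset.sum_range_one, CharP.cast_eq_zero, zero_mul, sub_zero]
  refine ((hasSum_pow_div_factorial y).mul_left y).congr_fun fun k => ?_
  rw [factorial_succ, pow_succ]
  push_cast
  field_simp

theorem hasSum_psi (n : ℕ) (x : ℝ) : HasSum (fun k => psi n k x) 1 := by
  have h := (hasSum_pow_div_factorial (n * x)).mul_left (exp (-(n * x)))
  rw [← exp_add, neg_add_cancel, exp_zero] at h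
  exact h.congr_fun fun k => mul_div_assoc ..

theorem hasSum_nat_mul_psi (n : ℕ) (x : ℝ) : HasSum (fun k => k * psi n k x) (n * x) := by
  have h := (hasSum_nat_mul_pow_div_factorial (n * x)).mul_left (exp (-(n * x)))
  rw [mul_left_comm, ← exp_add, neg_add_cancel, exp_zero, mul_one] at h
  exact h.congr_fun fun k => by rw [psi]; ring

theorem stmt_1_general (α β : ℝ) (hα : -1 < α) (n : ℕ) (hn : β < n) (x : ℝ) :
    mu α β n 1 x = (α + 1 + (n : ℝ) * x) / ((n : ℝ) - β) := by
  have hc : 0 < (n : ℝ) - β := sub_pos.2 hn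
  have hterm (k : ℕ) : ((n : ℝ) - β) ^ ((k : ℝ) + α + 1) / Gamma ((k : ℝ) + α + 1) *
      (∫ t in Ioi 0, t ^ 1 * t ^ ((k : ℝ) + α) * exp (-((n : ℝ) - β) * t)) * psi n k x =
      ((k : ℝ) + α + 1) / ((n : ℝ) - β) * psi n k x := by
    rw [rpow_div_Gamma_mul_integral_mul_rpow_mul_exp (by linarith [k.cast_nonneg (α := ℝ)]) hc]
  refine (tsum_congr hterm).trans (HasSum.tsum_eq ?_)
  have h := ((hasSum_nat_mul_psi n x).add ((hasSum_psi n x).mul_left (α + 1))).div_const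
    ((n : ℝ) - β)
  rw [mul_one, add_comm (n * x : ℝ)] at h
  refine h.congr_fun fun k => ?_
  ring

/-- The first moment: `μ_1^{(α,β)}(x) = (α + 1 + n x)/(n − β)`. -/
theorem stmt_1 (α β : ℝ) (hα : -1 < α) (n : ℕ) (hn : β < n) (x : ℝ) (hx : 0 ≤ x) :
    mu α β n 1 x = (α + 1 + (n : ℝ) * x) / ((n : ℝ) - β) :=
  stmt_1_general α β hα n hn x
end

section
/- For every x ≥ 0, the second moment satisfies μ_2^{(α,β)}(x) = ((n x)^2 + (2α + 4) n x + (α+1)(α+2)) / (n − β)^2. -/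
open MeasureTheory Real Filter

/-!
The `k`-th Laguerre coefficient of `t ↦ t ^ r` is a ratio of Gamma values,
`Γ(k + α + 1 + r) / (Γ(k + α + 1) (n - β) ^ r)`, which for `r = 2` is
`(k + α + 1)(k + α + 2) / (n - β) ^ 2`.
Writing this quadratic in `k` in the falling-factorial basis `k(k-1), k, 1` reduces the moment to the
factorial moments `∑ₖ k(k-1)⋯(k-j+1) ψ_{n,k}(x) = (nx) ^ j` of the Poisson weights.
-/

open Nat in
theorem hasSum_descFactorial_mul_pow_div_factorial (y : ℝ) (j : ℕ) :
    HasSum (fun k : ℕ => (k.descFactorial j : ℝ) * y ^ k / k !) (y ^ j * exp y) := by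
  rw [← hasSum_nat_add_iff' j, Finset.sum_eq_zero fun i hi => by
    simp [descFactorial_eq_zero_iff_lt.mpr (Finset.mem_range.mp hi)], sub_zero]
  have hshift (k : ℕ) :
      ((k + j).descFactorial j : ℝ) * y ^ (k + j) / (k + j)! = y ^ j * (y ^ k / k !) := by
    have h := factorial_mul_descFactorial (Nat.le_add_left j k)
    rw [Nat.add_sub_cancel] at h
    rw [← h, cast_mul, pow_add]
    have hk : (k ! : ℝ) ≠ 0 := by positivity
    have hdesc : ((k + j).descFactorial j : ℝ) ≠ 0 := by
      exact_mod_cast (descFactorial_pos.mpr (Nat.le_add_left j k)).ne'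
    field_simp
  simp_rw [hshift]
  exact (exp_eq_exp_ℝ ▸ NormedSpace.expSeries_div_hasSum_exp y).mul_left _

theorem hasSum_descFactorial_mul_psi (n j : ℕ) (x : ℝ) :
    HasSum (fun k : ℕ => (k.descFactorial j : ℝ) * psi n k x) ((n * x) ^ j) := by
  have h := (hasSum_descFactorial_mul_pow_div_factorial (n * x) j).mul_left (exp (-(n * x)))
  rw [mul_left_comm, ← exp_add, neg_add_cancel, exp_zero, mul_one] at h
  refine h.congr_fun fun k => ?_
  rw [psi]
  ring

theorem rpow_div_Gamma_mul_integral_pow_mul_rpow_mul_exp_neg_mul {b s : ℝ} (hb : -1 < b)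
    (hs : 0 < s) (r : ℕ) :
    s ^ (b + 1) / Gamma (b + 1) * ∫ t in Set.Ioi (0 : ℝ), t ^ r * t ^ b * exp (-s * t)
      = Gamma (b + 1 + r) / Gamma (b + 1) / s ^ r := by
  have hbr : 0 < b + 1 + r := by linarith [r.cast_nonneg (α := ℝ)]
  have hintegral : ∫ t in Set.Ioi (0 : ℝ), t ^ r * t ^ b * exp (-s * t)
      = (1 / s) ^ (b + 1 + r) * Gamma (b + 1 + r) := by
    rw [← integral_rpow_mul_exp_neg_mul_Ioi hbr hs]
    refine setIntegral_congr_fun measurableSet_Ioi fun t (ht : 0 < t) => ?_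
    rw [show b + 1 + r - 1 = r + b by ring, rpow_add ht, rpow_natCast, neg_mul]
  have hpow : s ^ (b + 1) * (1 / s) ^ (b + 1 + r) = 1 / s ^ r := by
    rw [one_div, inv_rpow hs.le, ← rpow_neg hs.le, ← rpow_add hs, ← sub_eq_add_neg,
      sub_add_cancel_left, rpow_neg hs.le, rpow_natCast, one_div]
  rw [hintegral, div_mul_eq_mul_div, ← mul_assoc, hpow]
  ring

theorem mu_eq_tsum_Gamma_div {α β : ℝ} (hα : -1 < α) {n : ℕ} (hn : β < n) (r : ℕ) (x : ℝ) :
    mu α β n r x = ∑' k : ℕ,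
      Gamma ((k : ℝ) + α + 1 + r) / Gamma ((k : ℝ) + α + 1) / ((n : ℝ) - β) ^ r * psi n k x := by
  refine tsum_congr fun k => ?_
  have hb : -1 < (k : ℝ) + α := by linarith [k.cast_nonneg (α := ℝ)]
  rw [rpow_div_Gamma_mul_integral_pow_mul_rpow_mul_exp_neg_mul hb (sub_pos.mpr hn)]

theorem Gamma_add_two_div_Gamma {a : ℝ} (ha : 0 < a) :
    Gamma (a + (2 : ℕ)) / Gamma a = a * (a + 1) := by
  rw [Nat.cast_two, show a + 2 = a + 1 + 1 by ring, Gamma_add_one (by positivity),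
    Gamma_add_one ha.ne', div_eq_iff (Gamma_pos_of_pos ha).ne']
  ring

theorem stmt_2_general (α β : ℝ) (hα : -1 < α) (n : ℕ) (hn : β < n) (x : ℝ) :
    mu α β n 2 x =
      (((n : ℝ) * x) ^ 2 + (2 * α + 4) * ((n : ℝ) * x) + (α + 1) * (α + 2)) /
        ((n : ℝ) - β) ^ 2 := by
  have hsum := (((hasSum_descFactorial_mul_psi n 2 x).add
    ((hasSum_descFactorial_mul_psi n 1 x).mul_left (2 * α + 4))).add
    ((hasSum_descFactorial_mul_psi n 0 x).mul_left ((α + 1) * (α + 2)))).div_const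
    (((n : ℝ) - β) ^ 2)
  rw [pow_one, pow_zero, mul_one] at hsum
  rw [mu_eq_tsum_Gamma_div hα hn, ← hsum.tsum_eq]
  refine tsum_congr fun k => ?_
  rw [Gamma_add_two_div_Gamma (by linarith [k.cast_nonneg (α := ℝ)]),
    Nat.cast_descFactorial_two, Nat.descFactorial_one, Nat.descFactorial_zero]
  ring

/-- The second moment. -/
theorem stmt_2 (α β : ℝ) (hα : -1 < α) (n : ℕ) (hn : β < n) (x : ℝ) (hx : 0 ≤ x) :
    mu α β n 2 x =
      (((n : ℝ) * x) ^ 2 + (2 * α + 4) * ((n : ℝ) * x) + (α + 1) * (α + 2)) /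
        ((n : ℝ) - β) ^ 2 :=
  stmt_2_general α β hα n hn x
end

section
/- For every integer r ≥ 1 and every x > 0, the derivative of the r-th moment satisfies the differential recurrence (d/dx) μ_r^{(α,β)}(x) = (n r / (n − β)) · μ_{r−1}^{(α+1,β)}(x), where on the right-hand side the (r−1)-th moment is taken with the parameter α replaced by α+1. -/
open MeasureTheory Real Filter

/-
The integrals in `M` are Gamma integrals, so `μ_r^{(α,β)} = ∑ₖ aₖ ψ_{n,k}` with
`aₖ = Γ(k+α+1+r) / (Γ(k+α+1) (n-β)^r)`. These coefficients grow polynomially in `k`, so the series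
may be differentiated termwise, and `ψ_{n,k}' = n (ψ_{n,k-1} - ψ_{n,k})` gives, after an index
shift, `(μ_r^{(α,β)})' = n ∑ₖ (aₖ₊₁ - aₖ) ψ_{n,k}`. The functional equation `Γ(z+1) = z Γ(z)`
turns `aₖ₊₁ - aₖ` into `r/(n-β)` times the `k`-th coefficient of `μ_{r-1}^{(α+1,β)}`.
-/

open Set
open scoped Nat

lemma summable_add_pow_mul_pow_div_factorial {s : ℝ} (hs : 0 ≤ s) (p : ℕ) (R : ℝ) :
    Summable fun k : ℕ => ((k : ℝ) + s) ^ p * R ^ k / k ! := by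
  refine .of_norm_bounded ((Real.summable_pow_div_factorial (exp 1 * |R|)).mul_left
    (p ! * exp s)) fun k => ?_
  have hks : 0 ≤ (k : ℝ) + s := by positivity
  have hpow : ((k : ℝ) + s) ^ p ≤ p ! * (exp s * exp 1 ^ k) := by
    have := Real.pow_div_factorial_le_exp _ hks p
    rw [div_le_iff₀ (by positivity)] at this
    rwa [Real.exp_one_pow, ← Real.exp_add, mul_comm, add_comm s]
  rw [norm_div, norm_mul, norm_pow, Real.norm_of_nonneg hks, Real.norm_eq_abs, abs_pow,
    RCLike.norm_natCast, mul_pow, mul_div_assoc, mul_div_assoc]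
  calc ((k : ℝ) + s) ^ p * (|R| ^ k / k !) ≤ p ! * (exp s * exp 1 ^ k) * (|R| ^ k / k !) := by
        gcongr
    _ = p ! * exp s * (exp 1 ^ k * (|R| ^ k / k !)) := by ring

lemma Gamma_add_nat_le {z : ℝ} (hz : 0 < z) (m : ℕ) :
    Gamma (z + m) ≤ (z + m) ^ m * Gamma z := by
  induction m with
  | zero => simp
  | succ m ih =>
    rw [Nat.cast_succ, ← add_assoc, Gamma_add_one (by positivity), pow_succ]
    set w := z + m
    have hw : 0 ≤ w := by positivity
    calc w * Gamma w ≤ w * (w ^ m * Gamma z) := by gcongr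
      _ = w ^ m * w * Gamma z := by ring
      _ ≤ (w + 1) ^ m * (w + 1) * Gamma z := by
        have := Gamma_pos_of_pos hz
        gcongr <;> linarith

noncomputable def psiPred (n : ℕ) : ℕ → ℝ → ℝ
  | 0, _ => 0
  | k + 1, x => psi n k x

lemma hasDerivAt_psi (n k : ℕ) (y : ℝ) :
    HasDerivAt (psi n k) (n * (psiPred n k y - psi n k y)) y := by
  have hlin : HasDerivAt (fun z : ℝ => n * z) n y := by
    simpa using (hasDerivAt_id y).const_mul (n : ℝ)
  have h := ((hlin.neg.exp).mul (hlin.pow k)).div_const (k ! : ℝ)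
  refine h.congr_deriv ?_
  cases k with
  | zero => simp [psi, psiPred, mul_comm]
  | succ k =>
    simp only [psiPred, psi, Nat.factorial_succ, Nat.add_sub_cancel, Pi.neg_apply, Pi.pow_apply]
    push_cast
    field_simp
    ring

-- The bound is a multiple of `ψ_{n,k}(ρ)`, so that summing it against coefficients is again
-- covered by `summable_mul_psi`.
lemma abs_psi_le (n k : ℕ) {y ρ : ℝ} (hy : |y| ≤ ρ) :
    |psi n k y| ≤ exp (2 * (n * ρ)) * psi n k ρ := by
  have hρ : 0 ≤ ρ := (abs_nonneg y).trans hy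
  have hny : |(n : ℝ) * y| ≤ n * ρ := by
    rw [abs_mul, Nat.abs_cast]; gcongr
  have hexp : exp (-(n * y)) ≤ exp (2 * n * ρ) * exp (-(n * ρ)) := by
    rw [← Real.exp_add, Real.exp_le_exp]
    linarith [neg_abs_le ((n : ℝ) * y)]
  simp only [psi, abs_div, abs_mul, abs_pow, Real.abs_exp, Nat.abs_cast, mul_div_assoc,
    ← mul_assoc]
  gcongr

lemma abs_psiPred_le (n k : ℕ) {y ρ : ℝ} (hy : |y| ≤ ρ) :
    |psiPred n k y| ≤ exp (2 * (n * ρ)) * psiPred n k ρ := by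
  cases k with
  | zero => simp [psiPred]
  | succ k => exact abs_psi_le n k hy

section polynomialGrowth

variable {a : ℕ → ℝ} {C s : ℝ} {p : ℕ}

lemma summable_mul_psi (hs : 0 ≤ s) (ha : ∀ k, |a k| ≤ C * (k + s) ^ p) (n : ℕ) (y : ℝ) :
    Summable fun k => a k * psi n k y := by
  refine .of_norm_bounded (((summable_add_pow_mul_pow_div_factorial hs p (n * |y|)).mul_left
    (C * exp (2 * (n * |y|)) * exp (-(n * |y|))))) fun k => ?_
  calc ‖a k * psi n k y‖ ≤ (C * (k + s) ^ p) * (exp (2 * (n * |y|)) * psi n k |y|) := by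
        rw [norm_mul, Real.norm_eq_abs, Real.norm_eq_abs]
        exact mul_le_mul (ha k) (abs_psi_le n k le_rfl) (abs_nonneg _)
          ((abs_nonneg _).trans (ha k))
    _ = _ := by simp only [psi]; ring

lemma summable_mul_psiPred (hs : 0 ≤ s) (ha : ∀ k, |a k| ≤ C * (k + s) ^ p) (n : ℕ) (y : ℝ) :
    Summable fun k => a k * psiPred n k y := by
  refine (summable_nat_add_iff 1).mp (summable_mul_psi (a := fun k => a (k + 1)) (C := C)
    (s := s + 1) (p := p) (by linarith) (fun k => ?_) n y)
  simpa [add_assoc, add_comm 1 s] using ha (k + 1)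

theorem hasDerivAt_tsum_mul_psi (hs : 0 ≤ s) (ha : ∀ k, |a k| ≤ C * (k + s) ^ p) (n : ℕ)
    (x : ℝ) :
    HasDerivAt (fun y => ∑' k, a k * psi n k y) (n * ∑' k, (a (k + 1) - a k) * psi n k x) x := by
  set ρ := |x| + 1
  have habs : ∀ k, |(|a k|)| ≤ C * (k + s) ^ p := by simpa using ha
  have hbound : ∀ k y, y ∈ Ioo (-ρ) ρ → ‖a k * (n * (psiPred n k y - psi n k y))‖ ≤
      n * exp (2 * (n * ρ)) * (|a k| * psiPred n k ρ + |a k| * psi n k ρ) := by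
    intro k y hy
    have hyρ : |y| ≤ ρ := (abs_lt.mpr hy).le
    rw [norm_mul, norm_mul, Real.norm_eq_abs, Real.norm_eq_abs, Real.norm_eq_abs, Nat.abs_cast]
    calc |a k| * (n * |psiPred n k y - psi n k y|)
        ≤ |a k| * (n * (|psiPred n k y| + |psi n k y|)) := by gcongr; exact abs_sub _ _
      _ ≤ |a k| * (n * (exp (2 * (n * ρ)) * psiPred n k ρ + exp (2 * (n * ρ)) * psi n k ρ)) := by
        gcongr
        exacts [abs_psiPred_le n k hyρ, abs_psi_le n k hyρ]
      _ = _ := by ring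
  have hx : x ∈ Ioo (-ρ) ρ := abs_lt.mp (by linarith)
  have hderiv := hasDerivAt_tsum_of_isPreconnected
    (((summable_mul_psiPred hs habs n ρ).add (summable_mul_psi hs habs n ρ)).mul_left _)
    isOpen_Ioo (convex_Ioo _ _).isPreconnected
    (fun k y _ => (hasDerivAt_psi n k y).const_mul (a k)) hbound hx (summable_mul_psi hs ha n x) hx
  refine hderiv.congr_deriv ?_
  have hpred := summable_mul_psiPred hs ha n x
  have hpsi := summable_mul_psi hs ha n x
  have hpred' : Summable fun k => a (k + 1) * psi n k x := (summable_nat_add_iff 1).mpr hpred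
  have hshift : ∑' k, a k * psiPred n k x = ∑' k, a (k + 1) * psi n k x := by
    simpa [psiPred] using hpred.tsum_eq_zero_add
  calc ∑' k, a k * (n * (psiPred n k x - psi n k x))
      = n * (∑' k, a k * psiPred n k x - ∑' k, a k * psi n k x) := by
        rw [← hpred.tsum_sub hpsi, ← tsum_mul_left]
        congr 1 with k
        ring
    _ = n * ∑' k, (a (k + 1) - a k) * psi n k x := by
        rw [hshift, ← hpred'.tsum_sub hpsi]
        simp_rw [sub_mul]

end polynomialGrowth

lemma setIntegral_pow_mul_rpow_mul_exp_neg_mul {γ c : ℝ} (hγ : -1 < γ) (hc : 0 < c) (r : ℕ) :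
    ∫ t in Ioi 0, t ^ r * t ^ γ * exp (-c * t) = Gamma (γ + 1 + r) / c ^ (γ + 1 + r) := by
  have hpos : 0 < γ + 1 + r := by linarith [r.cast_nonneg (α := ℝ)]
  rw [div_eq_mul_inv, mul_comm, ← inv_rpow hc.le, ← one_div,
    ← integral_rpow_mul_exp_neg_mul_Ioi hpos hc]
  refine setIntegral_congr_fun measurableSet_Ioi fun t (ht : 0 < t) => ?_
  rw [add_right_comm, add_sub_cancel_right, neg_mul, ← rpow_natCast, ← rpow_add ht, add_comm γ]

lemma Gamma_add_one_add_div_sub {z w : ℝ} (hz : 0 < z) (hzw : 0 < z + w) :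
    Gamma (z + 1 + w) / Gamma (z + 1) - Gamma (z + w) / Gamma z =
      w * (Gamma (z + w) / Gamma (z + 1)) := by
  have := (Gamma_pos_of_pos hz).ne'
  rw [add_right_comm, Gamma_add_one hzw.ne', Gamma_add_one hz.ne']
  field_simp
  ring

noncomputable def momentCoeff (α β : ℝ) (n r k : ℕ) : ℝ :=
  Gamma (k + α + 1 + r) / Gamma (k + α + 1) / ((n : ℝ) - β) ^ r

section moments

variable {α β : ℝ} {n : ℕ}

lemma mu_eq_tsum (hα : -1 < α) (hn : β < n) (r : ℕ) (y : ℝ) :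
    mu α β n r y = ∑' k, momentCoeff α β n r k * psi n k y := by
  have hc : 0 < (n : ℝ) - β := sub_pos.mpr hn
  refine tsum_congr fun k => ?_
  have hΓ := (Gamma_pos_of_pos (by linarith [k.cast_nonneg (α := ℝ)] : 0 < (k : ℝ) + α + 1)).ne'
  rw [setIntegral_pow_mul_rpow_mul_exp_neg_mul (by linarith [k.cast_nonneg (α := ℝ)]) hc,
    momentCoeff, rpow_add hc ((k : ℝ) + α + 1), rpow_natCast]
  field_simp

lemma momentCoeff_succ_sub (hα : -1 < α) (r k : ℕ) :
    momentCoeff α β n r (k + 1) - momentCoeff α β n r k =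
      r / (n - β) * momentCoeff (α + 1) β n (r - 1) k := by
  have hz : 0 < (k : ℝ) + α + 1 := by linarith [k.cast_nonneg (α := ℝ)]
  have hshift : ((k + 1 : ℕ) : ℝ) + α + 1 = k + α + 1 + 1 := by push_cast; ring
  simp only [momentCoeff, ← sub_div, hshift,
    Gamma_add_one_add_div_sub hz (by linarith [r.cast_nonneg (α := ℝ)] : 0 < (k : ℝ) + α + 1 + r)]
  cases r with
  | zero => simp
  | succ m =>
    rw [Nat.add_sub_cancel, show (k : ℝ) + (α + 1) + 1 + m = k + α + 1 + ((m + 1 : ℕ) : ℝ) by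
      push_cast; ring, show (k : ℝ) + (α + 1) + 1 = k + α + 1 + 1 by ring, pow_succ]
    field_simp

lemma abs_momentCoeff_le (hα : -1 < α) (hn : β < n) (r k : ℕ) :
    |momentCoeff α β n r k| ≤ (((n : ℝ) - β) ^ r)⁻¹ * (k + (α + 1 + r)) ^ r := by
  have hc : 0 < (n : ℝ) - β := sub_pos.mpr hn
  have hz : 0 < (k : ℝ) + α + 1 := by linarith [k.cast_nonneg (α := ℝ)]
  have hΓ := Gamma_pos_of_pos hz
  have hΓr := Gamma_pos_of_pos (by linarith [r.cast_nonneg (α := ℝ)] : 0 < (k : ℝ) + α + 1 + r)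
  rw [momentCoeff, abs_of_nonneg (by positivity), div_div, div_le_iff₀ (by positivity)]
  calc Gamma (k + α + 1 + r) ≤ (k + α + 1 + r) ^ r * Gamma (k + α + 1) := Gamma_add_nat_le hz r
    _ = _ := by field_simp; ring_nf

end moments

theorem stmt_5_general (α β : ℝ) (hα : -1 < α) (n : ℕ) (hn : β < n) (r : ℕ) (x : ℝ) :
    HasDerivAt (fun y => mu α β n r y)
      (((n : ℝ) * r / ((n : ℝ) - β)) * mu (α + 1) β n (r - 1) x) x := by
  have hs : 0 ≤ α + 1 + r := by linarith [r.cast_nonneg (α := ℝ)]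
  simp only [mu_eq_tsum hα hn, mu_eq_tsum (by linarith : -1 < α + 1) hn]
  refine (hasDerivAt_tsum_mul_psi hs (abs_momentCoeff_le hα hn r) n x).congr_deriv ?_
  rw [← tsum_mul_left, ← tsum_mul_left]
  congr 1 with k
  rw [momentCoeff_succ_sub hα]
  ring

/-- Differential recurrence: `(d/dx) μ_r^{(α,β)}(x) = (n r/(n−β)) μ_{r−1}^{(α+1,β)}(x)`. -/
theorem stmt_5 (α β : ℝ) (hα : -1 < α) (n : ℕ) (hn : β < n) (r : ℕ) (hr : 1 ≤ r)
    (x : ℝ) (hx : 0 < x) :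
    HasDerivAt (fun y => mu α β n r y)
      (((n : ℝ) * r / ((n : ℝ) - β)) * mu (α + 1) β n (r - 1) x) x :=
  stmt_5_general α β hα n hn r x
end

section
/- Let A ≥ 0, K > 0, and let f : [0,∞) → ℝ be measurable with |f(t)| ≤ K e^{A t} for all t ≥ 0. If n − β > A, then for every x ≥ 0, | M_n^{(α,β)}[f](x) | ≤ K · ((n − β)/(n − β − A))^{α+1} · exp( n x A / (n − β − A) ). -/
open MeasureTheory Real Filter

/-!
Each coefficient integral is bounded by replacing `|f t|` with `K e^{At}`, which turns it into a
Gamma integral with rate `c - A` (where `c = n - β`); this cancels the normalising factor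
`c^s / Γ(s)` up to `(c / (c - A))^s`. Writing `ρ = c / (c - A)`, the resulting majorant
`K ρ^{α+1} Σ ρ^k ψ_{n,k}(x)` is summed by the generating function `Σ ρ^k ψ_{n,k}(x) = e^{(ρ-1)nx}`.
-/

lemma psi_nonneg (n k : ℕ) {x : ℝ} (hx : 0 ≤ x) : 0 ≤ psi n k x := by
  unfold psi
  positivity

lemma hasSum_pow_mul_psi (n : ℕ) (ρ x : ℝ) :
    HasSum (fun k => ρ ^ k * psi n k x) (exp ((ρ - 1) * (n * x))) := by
  have h := (NormedSpace.expSeries_div_hasSum_exp (ρ * (n * x))).mul_left (exp (-(n * x)))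
  rw [← Real.exp_eq_exp_ℝ, ← exp_add] at h
  have hterm : (fun k => ρ ^ k * psi n k x) =
      fun k => exp (-(n * x)) * ((ρ * (n * x)) ^ k / k.factorial) := by
    funext k
    rw [psi, mul_pow]
    ring
  rwa [hterm, show (ρ - 1) * (n * x) = -(n * x) + ρ * (n * x) by ring]

lemma abs_setIntegral_mul_rpow_mul_exp_le {f : ℝ → ℝ} {A K c p : ℝ} (hp : -1 < p) (hAc : A < c)
    (hbound : ∀ t, 0 ≤ t → |f t| ≤ K * exp (A * t)) :
    |∫ t in Set.Ioi 0, f t * t ^ p * exp (-c * t)| ≤ K * (Gamma (p + 1) / (c - A) ^ (p + 1)) := by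
  have hd : 0 < c - A := sub_pos.2 hAc
  have hgamma := integral_rpow_mul_exp_neg_mul_Ioi (a := p + 1) (by linarith) hd
  rw [add_sub_cancel_right] at hgamma
  have hint : IntegrableOn (fun t => t ^ p * exp (-((c - A) * t))) (Set.Ioi 0) := by
    refine (integrableOn_rpow_mul_exp_neg_mul_rpow hp one_pos hd).congr_fun
      (fun t _ => ?_) measurableSet_Ioi
    simp only [rpow_one, neg_mul]
  calc |∫ t in Set.Ioi 0, f t * t ^ p * exp (-c * t)|
      ≤ ∫ t in Set.Ioi 0, K * (t ^ p * exp (-((c - A) * t))) := by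
        rw [← Real.norm_eq_abs]
        refine norm_integral_le_of_norm_le (hint.const_mul K) ?_
        filter_upwards [self_mem_ae_restrict measurableSet_Ioi] with t (ht : 0 < t)
        have hpow : 0 ≤ t ^ p := rpow_nonneg ht.le p
        calc ‖f t * t ^ p * exp (-c * t)‖ = |f t| * (t ^ p * exp (-c * t)) := by
              rw [Real.norm_eq_abs, abs_mul, abs_mul, abs_of_nonneg hpow,
                abs_of_pos (exp_pos _), mul_assoc]
          _ ≤ K * exp (A * t) * (t ^ p * exp (-c * t)) := by gcongr; exact hbound t ht.le
          _ = K * (t ^ p * exp (-((c - A) * t))) := by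
              rw [show -((c - A) * t) = A * t + -c * t by ring, exp_add]
              ring
    _ = K * (Gamma (p + 1) / (c - A) ^ (p + 1)) := by
        rw [integral_const_mul, hgamma, one_div, inv_rpow hd.le]
        ring

lemma abs_M_summand_le {f : ℝ → ℝ} {A K c α x : ℝ} (n k : ℕ) (hα : -1 < α) (hA : 0 ≤ A)
    (hAc : A < c) (hbound : ∀ t, 0 ≤ t → |f t| ≤ K * exp (A * t)) (hx : 0 ≤ x) :
    |c ^ ((k : ℝ) + α + 1) / Gamma ((k : ℝ) + α + 1) *
        (∫ t in Set.Ioi 0, f t * t ^ ((k : ℝ) + α) * exp (-c * t)) * psi n k x| ≤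
      K * (c / (c - A)) ^ (α + 1) * ((c / (c - A)) ^ k * psi n k x) := by
  have hc : 0 < c := hA.trans_lt hAc
  have hd : 0 < c - A := sub_pos.2 hAc
  have hp : -1 < (k : ℝ) + α := by linarith [(k.cast_nonneg : (0 : ℝ) ≤ k)]
  have hgamma : 0 < Gamma ((k : ℝ) + α + 1) := Gamma_pos_of_pos (by linarith)
  have hint := abs_setIntegral_mul_rpow_mul_exp_le hp hAc hbound
  calc _ = c ^ ((k : ℝ) + α + 1) / Gamma ((k : ℝ) + α + 1) *
        |∫ t in Set.Ioi 0, f t * t ^ ((k : ℝ) + α) * exp (-c * t)| * psi n k x := by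
        rw [abs_mul, abs_mul, abs_of_nonneg (psi_nonneg n k hx), abs_of_pos (by positivity)]
    _ ≤ c ^ ((k : ℝ) + α + 1) / Gamma ((k : ℝ) + α + 1) *
        (K * (Gamma ((k : ℝ) + α + 1) / (c - A) ^ ((k : ℝ) + α + 1))) * psi n k x := by
        gcongr
        exact psi_nonneg n k hx
    _ = K * (c / (c - A)) ^ ((k : ℝ) + α + 1) * psi n k x := by
        rw [div_rpow hc.le hd.le]
        field_simp
    _ = K * (c / (c - A)) ^ (α + 1) * ((c / (c - A)) ^ k * psi n k x) := by
        rw [show (k : ℝ) + α + 1 = α + 1 + k by ring, rpow_add (by positivity), rpow_natCast]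
        ring

theorem stmt_15_general (α β : ℝ) (hα : -1 < α) (n : ℕ)
    (A K : ℝ) (hA : 0 ≤ A) (f : ℝ → ℝ)
    (hbound : ∀ t : ℝ, 0 ≤ t → |f t| ≤ K * Real.exp (A * t)) (hnA : A < (n : ℝ) - β)
    (x : ℝ) (hx : 0 ≤ x) :
    |M α β n f x| ≤
      K * (((n : ℝ) - β) / ((n : ℝ) - β - A)) ^ (α + 1) *
        Real.exp ((n : ℝ) * x * A / ((n : ℝ) - β - A)) := by
  have hd : (n : ℝ) - β - A ≠ 0 := (sub_pos.2 hnA).ne'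
  have hexponent : (((n : ℝ) - β) / ((n : ℝ) - β - A) - 1) * (n * x) =
      n * x * A / ((n : ℝ) - β - A) := by
    field_simp
    ring
  have hmajorant := (hasSum_pow_mul_psi n (((n : ℝ) - β) / ((n : ℝ) - β - A)) x).mul_left
    (K * (((n : ℝ) - β) / ((n : ℝ) - β - A)) ^ (α + 1))
  rw [hexponent] at hmajorant
  rw [M, ← Real.norm_eq_abs]
  exact tsum_of_norm_bounded hmajorant fun k => abs_M_summand_le n k hα hA hnA hbound hx

/-- Growth bound: if `|f(t)| ≤ K e^{At}` and `n − β > A`, then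
`|M_n^{(α,β)}f(x)| ≤ K ((n−β)/(n−β−A))^{α+1} exp(nxA/(n−β−A))`. -/
theorem stmt_15 (α β : ℝ) (hα : -1 < α) (n : ℕ) (hn : β < n)
    (A K : ℝ) (hA : 0 ≤ A) (hK : 0 < K) (f : ℝ → ℝ) (hf : Measurable f)
    (hbound : ∀ t : ℝ, 0 ≤ t → |f t| ≤ K * Real.exp (A * t)) (hnA : A < (n : ℝ) - β)
    (x : ℝ) (hx : 0 ≤ x) :
    |M α β n f x| ≤
      K * (((n : ℝ) - β) / ((n : ℝ) - β - A)) ^ (α + 1) *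
        Real.exp ((n : ℝ) * x * A / ((n : ℝ) - β - A)) :=
  stmt_15_general α β hα n A K hA f hbound hnA x hx
end

section
/- Let β ≥ 0 be fixed and let α ∈ [−1/2, 0]. For natural numbers n > β and reals t > 0 define E_n(t) = (1/n) · (n − β)^{α+1} · t^α · γ(α+1, (n−β)t) / Γ(α+1), where γ(s, z) = ∫_0^z u^{s−1} e^{−u} du is the lower incomplete Gamma function. Then for every R > 0 there exists a finite constant C = C(R, α, β) such that E_n(t) ≤ C for all natural numbers n > β and all t ∈ (0, R]. -/
open MeasureTheory Real Filter

/-- The lower incomplete Gamma function `γ(s,z) = ∫_0^z u^{s−1} e^{−u} du`. -/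
noncomputable def lowerGamma (s z : ℝ) : ℝ :=
  ∫ u in (0 : ℝ)..z, u ^ (s - 1) * Real.exp (-u)

/-- The auxiliary function `E_n(t)` from Lemma on uniform bounds. -/
noncomputable def Efun (α β : ℝ) (n : ℕ) (t : ℝ) : ℝ :=
  (1 / (n : ℝ)) * ((n : ℝ) - β) ^ (α + 1) * t ^ α *
    lowerGamma (α + 1) (((n : ℝ) - β) * t) / Real.Gamma (α + 1)

/-!
With `z = (n - β) t` one has `E_n(t) = ((n - β) / n) · z^α γ(α+1, z) / Γ(α+1)` and `(n - β) / n ≤ 1`,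
so it suffices to bound `z^α γ(α+1, z)` for `z > 0`. For `z ≥ 1` use `z^α ≤ 1` (as `α ≤ 0`) and
`γ ≤ Γ`; for `z < 1` drop `e^{-u}` to get `γ(α+1, z) ≤ z^{α+1} / (α+1)`, whence
`z^α γ(α+1, z) ≤ z^{2α+1} / (α+1) ≤ 1 / (α+1)` (as `2α + 1 ≥ 0`).
-/

lemma integrableOn_rpow_sub_one_mul_exp_neg {s : ℝ} (hs : 0 < s) :
    IntegrableOn (fun u : ℝ => u ^ (s - 1) * exp (-u)) (Set.Ioi 0) :=
  (GammaIntegral_convergent hs).congr_fun (fun _ _ => mul_comm _ _) measurableSet_Ioi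

lemma lowerGamma_nonneg (s : ℝ) {z : ℝ} (hz : 0 ≤ z) : 0 ≤ lowerGamma s z :=
  intervalIntegral.integral_nonneg hz fun _ hu => mul_nonneg (rpow_nonneg hu.1 _) (exp_pos _).le

lemma lowerGamma_le_Gamma {s z : ℝ} (hs : 0 < s) (hz : 0 ≤ z) : lowerGamma s z ≤ Gamma s := by
  rw [lowerGamma, intervalIntegral.integral_of_le hz, Gamma_eq_integral hs]
  simp_rw [mul_comm (exp _)]
  exact setIntegral_mono_set (integrableOn_rpow_sub_one_mul_exp_neg hs)
    ((ae_restrict_mem measurableSet_Ioi).mono fun _ hu =>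
      mul_nonneg (rpow_nonneg (le_of_lt hu) _) (exp_pos _).le)
    Set.Ioc_subset_Ioi_self.eventuallyLE

lemma lowerGamma_le_rpow_div {s z : ℝ} (hs : 0 < s) (hz : 0 ≤ z) :
    lowerGamma s z ≤ z ^ s / s := by
  calc lowerGamma s z ≤ ∫ u in (0 : ℝ)..z, u ^ (s - 1) := by
        refine intervalIntegral.integral_mono_on hz ?_
          (intervalIntegral.intervalIntegrable_rpow' (by linarith)) fun u hu => ?_
        · rw [intervalIntegrable_iff_integrableOn_Ioc_of_le hz]
          exact (integrableOn_rpow_sub_one_mul_exp_neg hs).mono_set Set.Ioc_subset_Ioi_self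
        · exact mul_le_of_le_one_right (rpow_nonneg hu.1 _) (exp_le_one_iff.2 (by linarith [hu.1]))
    _ = z ^ s / s := by
        rw [integral_rpow (Or.inl (by linarith)), sub_add_cancel, zero_rpow hs.ne', sub_zero]

lemma rpow_mul_lowerGamma_add_one_le {α z : ℝ} (hα : α ∈ Set.Icc (-(1 : ℝ) / 2) 0) (hz : 0 < z) :
    z ^ α * lowerGamma (α + 1) z ≤ max (Gamma (α + 1)) (1 / (α + 1)) := by
  obtain ⟨hα₁, hα₂⟩ := hα
  have hs : 0 < α + 1 := by linarith
  rcases le_or_gt 1 z with hz₁ | hz₁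
  · calc z ^ α * lowerGamma (α + 1) z ≤ 1 * Gamma (α + 1) :=
          mul_le_mul (rpow_le_one_of_one_le_of_nonpos hz₁ hα₂) (lowerGamma_le_Gamma hs hz.le)
            (lowerGamma_nonneg _ hz.le) zero_le_one
      _ ≤ _ := by rw [one_mul]; exact le_max_left _ _
  · calc z ^ α * lowerGamma (α + 1) z ≤ z ^ α * (z ^ (α + 1) / (α + 1)) :=
          mul_le_mul_of_nonneg_left (lowerGamma_le_rpow_div hs hz.le) (rpow_nonneg hz.le _)
      _ = z ^ (2 * α + 1) / (α + 1) := by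
          rw [← mul_div_assoc, ← rpow_add hz]
          ring_nf
      _ ≤ 1 / (α + 1) := by
          gcongr
          exact rpow_le_one hz.le hz₁.le (by linarith)
      _ ≤ _ := le_max_right _ _

lemma Efun_eq {α β : ℝ} {n : ℕ} (hβn : β < n) {t : ℝ} (ht : 0 ≤ t) :
    Efun α β n t = ((n - β) / n) *
      ((((n : ℝ) - β) * t) ^ α * lowerGamma (α + 1) (((n : ℝ) - β) * t)) / Gamma (α + 1) := by
  have hm : 0 < (n : ℝ) - β := sub_pos.2 hβn
  rw [Efun, mul_rpow hm.le ht, rpow_add_one hm.ne']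
  ring

theorem stmt_16_general (β : ℝ) (hβ : 0 ≤ β) (α : ℝ) (hα : α ∈ Set.Icc (-(1 : ℝ) / 2) 0)
    (R : ℝ) :
    ∃ C : ℝ, ∀ n : ℕ, β < n → ∀ t ∈ Set.Ioc (0 : ℝ) R, Efun α β n t ≤ C := by
  refine ⟨max (Gamma (α + 1)) (1 / (α + 1)) / Gamma (α + 1), fun n hn t ht => ?_⟩
  have hz : 0 < ((n : ℝ) - β) * t := mul_pos (sub_pos.2 hn) ht.1
  have hΓ : 0 < Gamma (α + 1) := Gamma_pos_of_pos (by linarith [hα.1])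
  have hratio : ((n : ℝ) - β) / n ≤ 1 := div_le_one_of_le₀ (by linarith) (by linarith)
  rw [Efun_eq hn ht.1.le, mul_div_assoc]
  refine (mul_le_of_le_one_left ?_ hratio).trans ?_
  · exact div_nonneg (mul_nonneg (rpow_nonneg hz.le _) (lowerGamma_nonneg _ hz.le)) hΓ.le
  · gcongr
    exact rpow_mul_lowerGamma_add_one_le hα hz

/-- Uniform boundedness of `E_n` on `(0, R]`, uniformly in `n > β`. -/
theorem stmt_16 (β : ℝ) (hβ : 0 ≤ β) (α : ℝ) (hα : α ∈ Set.Icc (-(1 : ℝ) / 2) 0)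
    (R : ℝ) (hR : 0 < R) :
    ∃ C : ℝ, ∀ n : ℕ, β < n → ∀ t ∈ Set.Ioc (0 : ℝ) R, Efun α β n t ≤ C :=
  stmt_16_general β hβ α hα R
end

section
/- For every x ≥ 0, the function t ↦ e^{−β t} is an eigenfunction of M_n^{(α,β)}: M_n^{(α,β)}[t ↦ e^{−β t}](x) = (1 − β/n)^{α+1} · e^{−β x}. In particular, when 0 < β < n the eigenvalue λ_2 = (1 − β/n)^{α+1} satisfies 0 < λ_2 < 1, so that the r-th iterate satisfies (M_n^{(α,β)})^r[t ↦ e^{−β t}](x) = λ_2^r e^{−β x} for every r ≥ 1. -/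
open MeasureTheory Real Filter

lemma M_const_mul (α β : ℝ) (n : ℕ) (c : ℝ) (f : ℝ → ℝ) (x : ℝ) :
    M α β n (fun t => c * f t) x = c * M α β n f x := by
  unfold M
  rw [← tsum_mul_left]
  refine tsum_congr fun k => ?_
  simp_rw [mul_assoc c, integral_const_mul]
  ring

lemma M_exp (α β : ℝ) (hα : -1 < α) (hβ : 0 ≤ β) (n : ℕ) (hn : β < n) (x : ℝ) :
    M α β n (fun t => Real.exp (-β * t)) x =
      (1 - β / (n : ℝ)) ^ (α + 1) * Real.exp (-β * x) := by
  have hn0 : (0 : ℝ) < n := lt_of_le_of_lt hβ hn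
  have hq0 : (0 : ℝ) < 1 - β / n := by
    rw [sub_pos, div_lt_one hn0]; exact hn
  have hnb : (0 : ℝ) ≤ (n : ℝ) - β := by linarith
  have hqe : ((n : ℝ) - β) * (1 / n) = 1 - β / n := by
    field_simp
  unfold M
  have hterm : ∀ k : ℕ,
      (((n : ℝ) - β) ^ ((k : ℝ) + α + 1) / Real.Gamma ((k : ℝ) + α + 1)) *
        (∫ t in Set.Ioi (0 : ℝ),
          Real.exp (-β * t) * t ^ ((k : ℝ) + α) * Real.exp (-((n : ℝ) - β) * t)) *
        psi n k x =
      ((1 - β / n) ^ (α + 1) * Real.exp (-(n * x))) *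
        (((1 - β / n) * (n * x)) ^ k / (Nat.factorial k)) := by
    intro k
    have hpos : 0 < (k : ℝ) + α + 1 := by
      have : (0 : ℝ) ≤ k := Nat.cast_nonneg k
      linarith
    have hint : (∫ t in Set.Ioi (0 : ℝ),
        Real.exp (-β * t) * t ^ ((k : ℝ) + α) * Real.exp (-((n : ℝ) - β) * t)) =
        (1 / n) ^ ((k : ℝ) + α + 1) * Real.Gamma ((k : ℝ) + α + 1) := by
      rw [← Real.integral_rpow_mul_exp_neg_mul_Ioi hpos hn0]
      refine setIntegral_congr_fun measurableSet_Ioi fun t _ => ?_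
      rw [show (k : ℝ) + α + 1 - 1 = (k : ℝ) + α by ring, mul_right_comm, ← Real.exp_add,
        show -β * t + -((n : ℝ) - β) * t = -((n : ℝ) * t) by ring, mul_comm]
    rw [hint]
    have hΓ : Real.Gamma ((k : ℝ) + α + 1) ≠ 0 :=
      ne_of_gt (Real.Gamma_pos_of_pos hpos)
    have h1 : ((n : ℝ) - β) ^ ((k : ℝ) + α + 1) / Real.Gamma ((k : ℝ) + α + 1) *
        ((1 / n) ^ ((k : ℝ) + α + 1) * Real.Gamma ((k : ℝ) + α + 1)) =
        (1 - β / n) ^ ((k : ℝ) + α + 1) := by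
      rw [div_mul_eq_mul_div, ← mul_assoc, mul_div_assoc, div_self hΓ, mul_one,
        ← Real.mul_rpow hnb (by positivity), hqe]
    rw [h1]
    have h2 : (1 - β / n) ^ ((k : ℝ) + α + 1) =
        (1 - β / n) ^ (α + 1) * (1 - β / n) ^ k := by
      rw [show (k : ℝ) + α + 1 = (α + 1) + (k : ℝ) by ring, Real.rpow_add hq0,
        Real.rpow_natCast]
    rw [h2]
    unfold psi
    rw [mul_pow ((1:ℝ) - β / n)]
    ring
  rw [tsum_congr hterm, tsum_mul_left]
  have hexp : ∑' k : ℕ, ((1 - β / n) * (n * x)) ^ k / (Nat.factorial k : ℝ) =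
      Real.exp ((1 - β / n) * (n * x)) := by
    rw [Real.exp_eq_exp_ℝ, NormedSpace.exp_eq_tsum_div]
  rw [hexp, mul_assoc, ← Real.exp_add,
    show -((n : ℝ) * x) + (1 - β / n) * ((n : ℝ) * x) = -β * x by field_simp; ring]

/-- `e^{−βx}` is an eigenfunction of `M_n^{(α,β)}`. -/
theorem stmt_19 (α β : ℝ) (hα : -1 < α) (hβ : 0 ≤ β) (n : ℕ) (hn : β < n)
    (x : ℝ) (hx : 0 ≤ x) :
    M α β n (fun t => Real.exp (-β * t)) x =
      (1 - β / (n : ℝ)) ^ (α + 1) * Real.exp (-β * x) ∧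
    (0 < β →
      (0 < (1 - β / (n : ℝ)) ^ (α + 1) ∧ (1 - β / (n : ℝ)) ^ (α + 1) < 1) ∧
      ∀ r : ℕ, 1 ≤ r →
        (fun g => M α β n g)^[r] (fun t => Real.exp (-β * t)) x =
          ((1 - β / (n : ℝ)) ^ (α + 1)) ^ r * Real.exp (-β * x)) := by
  have hn0 : (0 : ℝ) < n := lt_of_le_of_lt hβ hn
  have hq0 : (0 : ℝ) < 1 - β / n := by
    rw [sub_pos, div_lt_one hn0]; exact hn
  refine ⟨M_exp α β hα hβ n hn x, fun hβ' => ⟨⟨Real.rpow_pos_of_pos hq0 _, ?_⟩, ?_⟩⟩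
  · exact Real.rpow_lt_one hq0.le (by simp [div_pos hβ' hn0]) (by linarith)
  · -- iterates: first prove function-level equality for all r ≥ 1
    have key : ∀ r : ℕ, (fun g => M α β n g)^[r + 1] (fun t => Real.exp (-β * t)) =
        fun y => ((1 - β / (n : ℝ)) ^ (α + 1)) ^ (r + 1) * Real.exp (-β * y) := by
      intro r
      induction r with
      | zero =>
        funext y
        simpa using M_exp α β hα hβ n hn y
      | succ r ih =>
        rw [Function.iterate_succ_apply', ih]
        funext y
        rw [M_const_mul, M_exp α β hα hβ n hn y]
        ring
    intro r hr
    obtain ⟨s, rfl⟩ := Nat.exists_eq_add_of_le hr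
    rw [add_comm 1 s, key s]
end
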